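/- arXiv:2503.09411 — 7 statements merged into one kernel-verified Lean document; each statement's English description precedes it below -/
import Mathlib

section
/- Let h : [0,1] → [0,1] be differentiable, p-Lipschitz, nonincreasing with h(1) = 0, and define H(v) = ∫_v^1 h(u) du. Then for every v ∈ [0,1), h(v)^2 ≤ 2p·H(v). -/
open Real Set

theorem stmt0 (p : ℝ) (h h' : ℝ → ℝ)
    (hderiv : ∀ u ∈ Icc (0:ℝ) 1, HasDerivAt h (h' u) u)
    (hlip : ∀ u ∈ Icc (0:ℝ) 1, |h' u| ≤ p)
    (hrange : ∀ u ∈ Icc (0:ℝ) 1, h u ∈ Icc (0:ℝ) 1)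
    (hmono : AntitoneOn h (Icc (0:ℝ) 1))
    (hend : h 1 = 0) :
    ∀ v ∈ Ico (0:ℝ) 1, (h v) ^ 2 ≤ 2 * p * ∫ u in v..1, h u := by
  intro v hv
  obtain ⟨hv0, hv1⟩ := hv
  have hvI : v ∈ Icc (0:ℝ) 1 := ⟨hv0, le_of_lt hv1⟩
  have hp0 : 0 ≤ p := le_trans (abs_nonneg _) (hlip 0 ⟨le_refl 0, zero_le_one⟩)
  have hcont : ContinuousOn h (Icc (0:ℝ) 1) := fun u hu =>
    (hderiv u hu).continuousAt.continuousWithinAt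
  -- Lipschitz bound
  have hlipb : ∀ x ∈ Icc (0:ℝ) 1, ∀ y ∈ Icc (0:ℝ) 1, ‖h y - h x‖ ≤ p * ‖y - x‖ := by
    intro x hx y hy
    exact (convex_Icc (0:ℝ) 1).norm_image_sub_le_of_norm_hasDerivWithin_le
      (fun u hu => (hderiv u hu).hasDerivWithinAt) (fun u hu => hlip u hu) hx hy
  set c := h v with hc
  clear_value c
  have hc0 : 0 ≤ c := by rw [hc]; exact (hrange v hvI).1
  have hcle : c ≤ p * (1 - v) := by
    have := hlipb v hvI 1 (by norm_num)
    rw [hend, ← hc] at this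
    have h1 : ‖(0:ℝ) - c‖ = c := by simp [abs_of_nonneg hc0]
    have h2 : ‖(1:ℝ) - v‖ = 1 - v := by rw [Real.norm_eq_abs, abs_of_nonneg (by linarith)]
    rw [h1, h2] at this
    exact this
  rcases eq_or_lt_of_le hp0 with hp | hp
  · -- p = 0
    have hcz : c ≤ 0 := by nlinarith
    have hc' : c = 0 := le_antisymm hcz hc0
    rw [← hp, hc']
    norm_num
  · set w := v + c / p with hw
    clear_value w
    have hdp : 0 ≤ c / p := div_nonneg hc0 hp0
    have hvw : v ≤ w := by rw [hw]; linarith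
    have hw1 : w ≤ 1 := by
      rw [hw]
      have : c / p ≤ 1 - v := (div_le_iff₀ hp).mpr (by nlinarith)
      linarith
    have hsub1 : Icc v w ⊆ Icc (0:ℝ) 1 := Icc_subset_Icc hv0 hw1
    have hsub2 : Icc w 1 ⊆ Icc (0:ℝ) 1 := Icc_subset_Icc (by linarith) le_rfl
    have hint1 : IntervalIntegrable h MeasureTheory.volume v w := by
      apply ContinuousOn.intervalIntegrable
      rw [uIcc_of_le hvw]
      exact hcont.mono hsub1
    have hint2 : IntervalIntegrable h MeasureTheory.volume w 1 := by
      apply ContinuousOn.intervalIntegrable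
      rw [uIcc_of_le hw1]
      exact hcont.mono hsub2
    have hsplit : (∫ u in v..1, h u) = (∫ u in v..w, h u) + ∫ u in w..1, h u :=
      (intervalIntegral.integral_add_adjacent_intervals hint1 hint2).symm
    have htail : 0 ≤ ∫ u in w..1, h u := by
      apply intervalIntegral.integral_nonneg hw1
      intro u hu
      exact (hrange u (hsub2 hu)).1
    have hlincont : Continuous (fun u : ℝ => c + p * v - p * u) := by
      exact (continuous_const.sub (continuous_const.mul continuous_id))
    have hlin : IntervalIntegrable (fun u => c + p * v - p * u) MeasureTheory.volume v w :=
      hlincont.intervalIntegrable v w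
    have hmain : (∫ u in v..w, (c + p * v - p * u)) ≤ ∫ u in v..w, h u := by
      apply intervalIntegral.integral_mono_on hvw hlin hint1
      intro u hu
      have huI : u ∈ Icc (0:ℝ) 1 := hsub1 hu
      have hlb := hlipb v hvI u huI
      rw [← hc, Real.norm_eq_abs, Real.norm_eq_abs,
        abs_of_nonneg (by linarith [hu.1] : (0:ℝ) ≤ u - v)] at hlb
      have h2 : c - h u ≤ p * (u - v) := by
        calc c - h u ≤ |h u - c| := by rw [abs_sub_comm]; exact le_abs_self _
          _ ≤ p * (u - v) := hlb
      linarith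
    have hcalc : (∫ u in v..w, (c + p * v - p * u))
        = (c + p * v) * (w - v) - p * (w ^ 2 - v ^ 2) / 2 := by
      have hg : IntervalIntegrable (fun u : ℝ => p * u) MeasureTheory.volume v w :=
        (by continuity : Continuous fun u : ℝ => p * u).intervalIntegrable v w
      rw [intervalIntegral.integral_sub intervalIntegrable_const hg,
        intervalIntegral.integral_const, intervalIntegral.integral_const_mul]
      simp only [integral_id, smul_eq_mul]
      ring
    have hpw : p * (w - v) = c := by
      rw [hw]; field_simp; ring
    have key : c ^ 2 = 2 * p * ((c + p * v) * (w - v) - p * (w ^ 2 - v ^ 2) / 2) := by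
      linear_combination (p * (w - v) - c) * hpw
    calc c ^ 2 = 2 * p * ((c + p * v) * (w - v) - p * (w ^ 2 - v ^ 2) / 2) := key
      _ = 2 * p * ∫ u in v..w, (c + p * v - p * u) := by rw [hcalc]
      _ ≤ 2 * p * ∫ u in v..w, h u := by
          exact mul_le_mul_of_nonneg_left hmain (by linarith)
      _ ≤ 2 * p * ((∫ u in v..w, h u) + ∫ u in w..1, h u) :=
          mul_le_mul_of_nonneg_left (le_add_of_nonneg_right htail) (by linarith)
      _ = 2 * p * ∫ u in v..1, h u := by rw [← hsplit]
end

section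
/- For the cosine annealing schedule h(u) = (1 + cos(πu))/2, we have (1-u)^2 ≤ h(u) ≤ (π²/4)·(1-u)^2 ≤ (5/2)·(1-u)^2 for all u ∈ [0,1]. -/
open Real Set

theorem stmt4 :
    ∀ u ∈ Icc (0:ℝ) 1,
      (1 - u) ^ 2 ≤ (1 + Real.cos (π * u)) / 2 ∧
      (1 + Real.cos (π * u)) / 2 ≤ (π ^ 2 / 4) * (1 - u) ^ 2 ∧
      (π ^ 2 / 4) * (1 - u) ^ 2 ≤ (5 / 2) * (1 - u) ^ 2 := by
  intro u hu
  obtain ⟨h0, h1⟩ := hu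
  have hpi := Real.pi_pos
  set v := 1 - u with hv
  have hv0 : 0 ≤ v := by linarith
  have hv1 : v ≤ 1 := by linarith
  have hcos : Real.cos (π * u) = 2 * Real.sin (π * v / 2) ^ 2 - 1 := by
    have : π * u = π - π * v := by rw [hv]; ring
    rw [this, Real.cos_pi_sub, Real.sin_sq_eq_half_sub, show 2 * (π * v / 2) = π * v by ring]
    ring
  have hsin0 : 0 ≤ Real.sin (π * v / 2) :=
    Real.sin_nonneg_of_nonneg_of_le_pi (by positivity) (by nlinarith)
  have hlow : v ≤ Real.sin (π * v / 2) := by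
    have := Real.mul_le_sin (x := π * v / 2) (by positivity) (by nlinarith)
    have hne : π ≠ 0 := ne_of_gt hpi
    calc v = 2 / π * (π * v / 2) := by field_simp
    _ ≤ _ := this
  have hup : Real.sin (π * v / 2) ≤ π * v / 2 :=
    Real.sin_le (by positivity)
  refine ⟨?_, ?_, ?_⟩
  · rw [hcos]; nlinarith
  · rw [hcos]; nlinarith [sq_nonneg (π * v / 2)]
  · have h2 : π ^ 2 < 10 := by nlinarith [Real.pi_lt_d2, Real.pi_pos]
    nlinarith [sq_nonneg v]
end

section
/- For the cosine annealing schedule h(u) = (1+cos(πu))/2, define H(v) = ∫_v^1 h(u) du and I(v) = ∫_v^1 h(u)^2/H(u) du. Then (1/3)(1-v)^3 ≤ H(v) ≤ (5/6)(1-v)^3 and (3/5)(1-v)^2 ≤ I(v) ≤ (75/8)(1-v)^2 for all v ∈ [0,1]. -/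
/-!
Writing `h(u) = sin² (π (1 - u) / 2)`, Jordan's inequality `2x/π ≤ sin x` on `[0, π/2]` and `sin x ≤ x`
gives `(1 - u)² ≤ h(u) ≤ (π²/4) (1 - u)² ≤ (5/2) (1 - u)²`. Integrating these polynomial
bounds over `[v, 1]` bounds `H`; dividing the bounds for `h²` by those for `H` sandwiches the
integrand of `I` between `(6/5) (1 - u)` and `(75/4) (1 - u)`, and integrating once more bounds `I`.
-/

open Real Set MeasureTheory

theorem integral_one_sub_pow (v : ℝ) (n : ℕ) :
    ∫ u in v..1, (1 - u) ^ n = (1 - v) ^ (n + 1) / (n + 1) := by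
  simp [intervalIntegral.integral_comp_sub_left (fun x : ℝ => x ^ n), integral_pow]

theorem integral_bounds_of_one_sub_pow_bounds {f : ℝ → ℝ} {v c d : ℝ} (n : ℕ) (hv : v ≤ 1)
    (hf : IntervalIntegrable f volume v 1)
    (hbounds : ∀ u ∈ Icc v 1, c * (1 - u) ^ n ≤ f u ∧ f u ≤ d * (1 - u) ^ n) :
    c * (1 - v) ^ (n + 1) / (n + 1) ≤ ∫ u in v..1, f u ∧
      ∫ u in v..1, f u ≤ d * (1 - v) ^ (n + 1) / (n + 1) := by
  have hpow (k : ℝ) : IntervalIntegrable (fun u => k * (1 - u) ^ n) volume v 1 := by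
    apply Continuous.intervalIntegrable; fun_prop
  have hint (k : ℝ) : ∫ u in v..1, k * (1 - u) ^ n = k * (1 - v) ^ (n + 1) / (n + 1) := by
    rw [intervalIntegral.integral_const_mul, integral_one_sub_pow, mul_div_assoc]
  rw [← hint c, ← hint d]
  exact ⟨intervalIntegral.integral_mono_on hv (hpow c) hf fun u hu => (hbounds u hu).1,
    intervalIntegral.integral_mono_on hv hf (hpow d) fun u hu => (hbounds u hu).2⟩

theorem sq_div_bounds_of_pow_bounds {a b c d x y t : ℝ} (ha : 0 ≤ a) (hc : 0 < c) (ht : 0 ≤ t)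
    (hx : a * t ^ 2 ≤ x ∧ x ≤ b * t ^ 2) (hy : c * t ^ 3 ≤ y ∧ y ≤ d * t ^ 3) :
    a ^ 2 / d * t ≤ x ^ 2 / y ∧ x ^ 2 / y ≤ b ^ 2 / c * t := by
  rcases ht.eq_or_lt with rfl | ht
  · obtain rfl : x = 0 := le_antisymm (by simpa using hx.2) (by simpa using hx.1)
    simp
  have hy₀ : 0 < y := (by positivity : 0 < c * t ^ 3).trans_le hy.1
  have hd : 0 < d := pos_of_mul_pos_left (hy₀.trans_le hy.2) (by positivity)
  have hx₀ : 0 ≤ x := (by positivity : 0 ≤ a * t ^ 2).trans hx.1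
  constructor
  · rw [le_div_iff₀ hy₀]
    calc a ^ 2 / d * t * y ≤ a ^ 2 / d * t * (d * t ^ 3) := by gcongr; exact hy.2
      _ = (a * t ^ 2) ^ 2 := by field_simp
      _ ≤ x ^ 2 := by gcongr; exact hx.1
  · rw [div_le_iff₀ hy₀]
    calc x ^ 2 ≤ (b * t ^ 2) ^ 2 := by gcongr; exact hx.2
      _ = b ^ 2 / c * t * (c * t ^ 3) := by field_simp
      _ ≤ b ^ 2 / c * t * y := by gcongr; exact hy.1

theorem integral_sq_div_bounds {h H : ℝ → ℝ} {v a b c d : ℝ} (hv : v ≤ 1) (ha : 0 ≤ a)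
    (hc : 0 < c) (hh_meas : Measurable h) (hH_meas : Measurable H)
    (hh : ∀ u ∈ Icc v 1, a * (1 - u) ^ 2 ≤ h u ∧ h u ≤ b * (1 - u) ^ 2)
    (hH : ∀ u ∈ Icc v 1, c * (1 - u) ^ 3 ≤ H u ∧ H u ≤ d * (1 - u) ^ 3) :
    a ^ 2 / d * (1 - v) ^ 2 / 2 ≤ ∫ u in v..1, h u ^ 2 / H u ∧
      ∫ u in v..1, h u ^ 2 / H u ≤ b ^ 2 / c * (1 - v) ^ 2 / 2 := by
  have hpt (u : ℝ) (hu : u ∈ Icc v 1) :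
      a ^ 2 / d * (1 - u) ^ 1 ≤ h u ^ 2 / H u ∧ h u ^ 2 / H u ≤ b ^ 2 / c * (1 - u) ^ 1 := by
    simpa only [pow_one] using
      sq_div_bounds_of_pow_bounds ha hc (sub_nonneg.2 hu.2) (hh u hu) (hH u hu)
  have hint : IntervalIntegrable (fun u => h u ^ 2 / H u) volume v 1 := by
    refine IntervalIntegrable.mono_fun' (g := fun u => b ^ 2 / c * (1 - u) ^ 1)
      (by apply Continuous.intervalIntegrable; fun_prop)
      ((hh_meas.pow_const 2).div hH_meas).aestronglyMeasurable ?_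
    rw [uIoc_of_le hv]
    filter_upwards [ae_restrict_mem measurableSet_Ioc] with u hu
    have ht : 0 ≤ 1 - u := sub_nonneg.2 hu.2
    have hH₀ : 0 ≤ H u := (by positivity : 0 ≤ c * (1 - u) ^ 3).trans (hH u (Ioc_subset_Icc_self hu)).1
    rw [norm_of_nonneg (by positivity)]
    exact (hpt u (Ioc_subset_Icc_self hu)).2
  have := integral_bounds_of_one_sub_pow_bounds 1 hv hint hpt
  norm_num at this
  exact this
theorem one_add_cos_div_two_eq_sin_sq (u : ℝ) :
    (1 + cos (π * u)) / 2 = sin (π * (1 - u) / 2) ^ 2 := by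
  rw [← cos_pi_div_two_sub, cos_sq]
  ring_nf

theorem one_sub_sq_le_one_add_cos_div_two {u : ℝ} (hu : u ∈ Icc (0 : ℝ) 1) :
    (1 - u) ^ 2 ≤ (1 + cos (π * u)) / 2 := by
  have hjordan := mul_le_sin (x := π * (1 - u) / 2) (by nlinarith [pi_pos, hu.2])
    (by nlinarith [pi_pos, hu.1])
  rw [one_add_cos_div_two_eq_sin_sq]
  have : 2 / π * (π * (1 - u) / 2) = 1 - u := by field_simp
  rw [this] at hjordan
  exact pow_le_pow_left₀ (by linarith [hu.2]) hjordan 2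

theorem one_add_cos_div_two_le (u : ℝ) : (1 + cos (π * u)) / 2 ≤ 5 / 2 * (1 - u) ^ 2 := by
  rw [one_add_cos_div_two_eq_sin_sq]
  calc sin (π * (1 - u) / 2) ^ 2 ≤ (π * (1 - u) / 2) ^ 2 := sin_sq_le_sq
    _ = π ^ 2 / 4 * (1 - u) ^ 2 := by ring
    _ ≤ 5 / 2 * (1 - u) ^ 2 := by
      gcongr ?_ * _
      nlinarith [mul_lt_mul'' pi_lt_d2 pi_lt_d2 pi_pos.le pi_pos.le]

theorem stmt6 (h H I : ℝ → ℝ)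
    (hh : ∀ u, h u = (1 + Real.cos (π * u)) / 2)
    (hH : ∀ v, H v = ∫ u in v..1, h u)
    (hI : ∀ v, I v = ∫ u in v..1, (h u) ^ 2 / H u) :
    ∀ v ∈ Icc (0:ℝ) 1,
      (1 / 3) * (1 - v) ^ 3 ≤ H v ∧ H v ≤ (5 / 6) * (1 - v) ^ 3 ∧
      (3 / 5) * (1 - v) ^ 2 ≤ I v ∧ I v ≤ (75 / 8) * (1 - v) ^ 2 := by
  have hh_cont : Continuous h := by rw [funext hh]; fun_prop
  have hH_cont : Continuous H := by
    have hH' : H = fun v => -∫ u in (1 : ℝ)..v, h u :=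
      funext fun v => by rw [hH, intervalIntegral.integral_symm]
    exact hH' ▸ (intervalIntegral.continuous_primitive (hh_cont.intervalIntegrable ·) 1).neg
  have hh_bounds (u : ℝ) (hu : u ∈ Icc (0 : ℝ) 1) :
      1 * (1 - u) ^ 2 ≤ h u ∧ h u ≤ 5 / 2 * (1 - u) ^ 2 := by
    rw [hh, one_mul]
    exact ⟨one_sub_sq_le_one_add_cos_div_two hu, one_add_cos_div_two_le u⟩
  have hH_bounds (u : ℝ) (hu : u ∈ Icc (0 : ℝ) 1) :
      1 / 3 * (1 - u) ^ 3 ≤ H u ∧ H u ≤ 5 / 6 * (1 - u) ^ 3 := by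
    have := integral_bounds_of_one_sub_pow_bounds 2 hu.2 (hh_cont.intervalIntegrable _ _)
      fun w hw => hh_bounds w ⟨hu.1.trans hw.1, hw.2⟩
    rw [hH]
    constructor <;> linarith [this.1, this.2]
  intro v hv
  have hI_bounds := integral_sq_div_bounds hv.2 zero_le_one (by norm_num : (0 : ℝ) < 1 / 3)
    hh_cont.measurable hH_cont.measurable (fun u hu => hh_bounds u ⟨hv.1.trans hu.1, hu.2⟩)
    (fun u hu => hH_bounds u ⟨hv.1.trans hu.1, hu.2⟩)
  rw [hI]
  refine ⟨(hH_bounds v hv).1, (hH_bounds v hv).2, ?_, ?_⟩ <;> linarith [hI_bounds.1, hI_bounds.2]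
end

section
/- For the cosine annealing schedule, with H and I as above and any ρ ≥ 1, the choice v̂ = 1 - ρ^{-2/5} ∈ [0,1) satisfies H(0)/(ρ·H(v̂)) + ρ·I(v̂)/I(0) ≤ 18·ρ^{1/5}, where H(0) = 1/2. -/
open Real Set MeasureTheory

lemma intcos (a b c : ℝ) (hc : c ≠ 0) :
    ∫ u in a..b, Real.cos (c * u) = (Real.sin (c * b) - Real.sin (c * a)) / c := by
  rw [intervalIntegral.integral_comp_mul_left Real.cos hc, integral_cos, smul_eq_mul]
  field_simp

set_option maxHeartbeats 1000000 in
theorem stmt7 (ρ : ℝ) (hρ : 1 ≤ ρ) (h H I : ℝ → ℝ)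
    (hh : ∀ u, h u = (1 + Real.cos (π * u)) / 2)
    (hH : ∀ v, H v = ∫ u in v..1, h u)
    (hI : ∀ v, I v = ∫ u in v..1, (h u) ^ 2 / H u) :
    (1 - ρ ^ (-2 / 5 : ℝ) ∈ Ico (0:ℝ) 1) ∧
    H 0 = 1 / 2 ∧
    H 0 / (ρ * H (1 - ρ ^ (-2 / 5 : ℝ))) + ρ * I (1 - ρ ^ (-2 / 5 : ℝ)) / I 0
      ≤ 18 * ρ ^ (1 / 5 : ℝ) := by
  have hπ : (0:ℝ) < π := pi_pos
  have hρ0 : (0:ℝ) < ρ := lt_of_lt_of_le one_pos hρ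
  -- basic facts about h
  have hsq : ∀ u, h u = Real.cos (π * u / 2) ^ 2 := by
    intro u; rw [hh, Real.cos_sq]; ring_nf
  have hcontf : Continuous h := by
    have : h = fun u => (1 + Real.cos (π * u)) / 2 := funext hh
    rw [this]; fun_prop
  have h0 : ∀ u, 0 ≤ h u := fun u => (hsq u) ▸ sq_nonneg _
  have h1 : h 1 = 0 := by rw [hh]; simp
  -- cos (πu/2) = sin (π(1-u)/2)
  have hcs : ∀ u : ℝ, Real.cos (π * u / 2) = Real.sin (π * (1 - u) / 2) := by
    intro u
    rw [← Real.sin_pi_div_two_sub]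
    ring_nf
  -- explicit formula for H
  have hHf : ∀ v, H v = (1 - v) / 2 - Real.sin (π * v) / (2 * π) := by
    intro v
    rw [hH]
    have e1 : EqOn h (fun u => 1/2 + (1/2) * Real.cos (π * u)) (uIcc v 1) := by
      intro u _; rw [hh]; ring
    have c2 : IntervalIntegrable (fun u : ℝ => 1/2 * Real.cos (π * u)) volume v 1 :=
      Continuous.intervalIntegrable (by fun_prop) v 1
    rw [intervalIntegral.integral_congr e1,
      intervalIntegral.integral_add intervalIntegrable_const c2,
      intervalIntegral.integral_const_mul, intcos _ _ _ (ne_of_gt hπ)]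
    simp [Real.sin_pi]
    ring
  have H0 : H 0 = 1/2 := by rw [hHf]; simp
  have Hcont : Continuous H := by
    have : H = fun v => (1 - v) / 2 - Real.sin (π * v) / (2 * π) := funext hHf
    rw [this]; fun_prop
  -- pointwise lower bound on h
  have hlb : ∀ u ∈ Icc (0:ℝ) 1, (1-u)^2 ≤ h u := by
    intro u hu
    have hx0 : 0 ≤ π * (1 - u) / 2 := by
      have : (0:ℝ) ≤ 1 - u := by linarith [hu.2]
      positivity
    have hx1 : π * (1 - u) / 2 ≤ π / 2 := by
      have : 1 - u ≤ 1 := by linarith [hu.1]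
      nlinarith
    have key := Real.mul_le_sin hx0 hx1
    have key2 : 1 - u ≤ Real.sin (π * (1 - u) / 2) := by
      have hπ' : π ≠ 0 := ne_of_gt hπ
      calc 1 - u = 2 / π * (π * (1 - u) / 2) := by field_simp
        _ ≤ _ := key
    rw [hsq, hcs]
    have h1u : (0:ℝ) ≤ 1 - u := by linarith [hu.2]
    nlinarith
  -- pointwise upper bound on h
  have hub : ∀ u ∈ Icc (0:ℝ) 1, h u ≤ π^2/4 * (1-u)^2 := by
    intro u hu
    have h1u : (0:ℝ) ≤ 1 - u := by linarith [hu.2]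
    have hx0 : 0 ≤ π * (1 - u) / 2 := by positivity
    have key : Real.sin (π * (1 - u) / 2) ≤ π * (1 - u) / 2 := Real.sin_le hx0
    have key0 : 0 ≤ Real.sin (π * (1 - u) / 2) := by
      apply Real.sin_nonneg_of_nonneg_of_le_pi hx0
      nlinarith [hu.1]
    rw [hsq, hcs]
    nlinarith
  -- lower bound on H
  have HL : ∀ v ∈ Icc (0:ℝ) 1, (1-v)^3/3 ≤ H v := by
    intro v hv
    rw [hH]
    have e : ∫ u in v..1, (1-u)^2 = (1-v)^3/3 := by
      rw [intervalIntegral.integral_comp_sub_left (fun x => x^2) 1, integral_pow]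
      norm_num
    rw [← e]
    apply intervalIntegral.integral_mono_on hv.2
    · exact ((continuous_const.sub continuous_id).pow 2).intervalIntegrable v 1
    · exact hcontf.intervalIntegrable v 1
    · intro u hu
      exact hlb u ⟨le_trans hv.1 hu.1, hu.2⟩
  -- upper bound on H
  have HU : ∀ v ∈ Icc (0:ℝ) 1, H v ≤ 1/2 := by
    intro v hv
    rw [hHf]
    have : 0 ≤ Real.sin (π * v) := by
      apply Real.sin_nonneg_of_nonneg_of_le_pi (by nlinarith [hv.1, pi_pos])
      nlinarith [hv.2, pi_pos]
    have h2 : 0 ≤ Real.sin (π * v) / (2*π) := div_nonneg this (by positivity)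
    linarith [hv.1]
  -- the integrand of I
  set g : ℝ → ℝ := fun u => h u ^ 2 / H u with hg
  have g1 : g 1 = 0 := by simp [hg, h1]
  have gnonneg : ∀ u ∈ Icc (0:ℝ) 1, 0 ≤ g u := by
    intro u hu
    apply div_nonneg (sq_nonneg _)
    have := HL u hu
    nlinarith [pow_nonneg (show (0:ℝ) ≤ 1-u by linarith [hu.2]) 3]
  have gub : ∀ u ∈ Icc (0:ℝ) 1, g u ≤ 3*π^4/16 * (1-u) := by
    intro u hu
    rcases eq_or_lt_of_le hu.2 with heq | hlt
    · rw [heq, g1]; norm_num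
    · have h1u : (0:ℝ) < 1 - u := by linarith
      have hd : (0:ℝ) < (1-u)^3/3 := div_pos (pow_pos h1u 3) (by norm_num)
      have step : g u ≤ (π^2/4 * (1-u)^2)^2 / ((1-u)^3/3) := by
        apply div_le_div₀ (by positivity) _ hd (HL u hu)
        have := hub u hu
        nlinarith [h0 u]
      calc g u ≤ (π^2/4 * (1-u)^2)^2 / ((1-u)^3/3) := step
        _ = 3*π^4/16 * (1-u) := by field_simp; ring
  have glb : ∀ u ∈ Icc (0:ℝ) 1, 2 * h u ^ 2 ≤ g u := by
    intro u hu
    rcases eq_or_lt_of_le hu.2 with heq | hlt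
    · rw [heq, g1, h1]; norm_num
    · have h1u : (0:ℝ) < 1 - u := by linarith
      have hHpos : 0 < H u :=
        lt_of_lt_of_le (div_pos (pow_pos h1u 3) (by norm_num)) (HL u hu)
      have : h u ^ 2 / (1/2) ≤ h u ^2 / H u :=
        div_le_div_of_nonneg_left (sq_nonneg _) hHpos (HU u hu)
      calc 2 * h u ^ 2 = h u ^ 2 / (1/2) := by ring
        _ ≤ g u := this
  -- integrability of g
  have gmeas : Measurable g := ((hcontf.pow 2).measurable).div Hcont.measurable
  have gint : ∀ v ∈ Icc (0:ℝ) 1, IntervalIntegrable g volume v 1 := by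
    intro v hv
    apply IntervalIntegrable.mono_fun' (g := fun _ => (3*π^4/16 : ℝ)) intervalIntegrable_const
      gmeas.aestronglyMeasurable.restrict
    rw [Filter.EventuallyLE, ae_restrict_iff' measurableSet_uIoc]
    apply Filter.Eventually.of_forall
    intro x hx
    rw [uIoc_of_le hv.2] at hx
    have hx' : x ∈ Icc (0:ℝ) 1 := ⟨le_trans hv.1 (le_of_lt hx.1), hx.2⟩
    rw [Real.norm_eq_abs, abs_of_nonneg (gnonneg x hx')]
    have h2 := gub x hx'
    have c0 : (0:ℝ) ≤ 3*π^4/16 := by positivity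
    nlinarith [hx'.1, mul_nonneg c0 hx'.1]
  -- upper bound on I v for v ∈ [0,1]
  have IU : ∀ v ∈ Icc (0:ℝ) 1, I v ≤ 3*π^4/32 * (1-v)^2 := by
    intro v hv
    rw [hI]
    have e : ∫ u in v..1, 3*π^4/16 * (1-u) = 3*π^4/32 * (1-v)^2 := by
      rw [intervalIntegral.integral_const_mul,
        intervalIntegral.integral_comp_sub_left (fun x => x) 1]
      rw [integral_id]
      ring
    rw [← e]
    apply intervalIntegral.integral_mono_on hv.2 (gint v hv)
    · exact (continuous_const.mul (continuous_const.sub continuous_id)).intervalIntegrable v 1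
    · intro u hu
      exact gub u ⟨le_trans hv.1 hu.1, hu.2⟩
  have Inonneg : ∀ v ∈ Icc (0:ℝ) 1, 0 ≤ I v := by
    intro v hv
    rw [hI]
    apply intervalIntegral.integral_nonneg hv.2
    intro u hu
    exact gnonneg u ⟨le_trans hv.1 hu.1, hu.2⟩
  -- lower bound on I 0
  have IL : 3/4 ≤ I 0 := by
    rw [hI]
    have e0 : ∫ u in (0:ℝ)..1, 2 * h u ^ 2 = 3/4 := by
      have e1 : EqOn (fun u => 2 * h u ^ 2)
          (fun u => 3/4 + (Real.cos (π * u) + (1/4) * Real.cos (2*π * u))) (uIcc 0 1) := by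
        intro u _
        simp only
        rw [hh]
        have := Real.cos_sq (π * u)
        have e2 : Real.cos (2 * (π * u)) = Real.cos (2*π*u) := by ring_nf
        rw [e2] at this
        nlinarith [this]
      have c1 : IntervalIntegrable (fun u : ℝ => Real.cos (π * u)) volume 0 1 :=
        Continuous.intervalIntegrable (by fun_prop) 0 1
      have c2 : IntervalIntegrable (fun u : ℝ => 1/4 * Real.cos (2*π * u)) volume 0 1 :=
        Continuous.intervalIntegrable (by fun_prop) 0 1
      rw [intervalIntegral.integral_congr e1,
        intervalIntegral.integral_add intervalIntegrable_const (c1.add c2),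
        intervalIntegral.integral_add c1 c2,
        intervalIntegral.integral_const_mul, intcos _ _ _ (ne_of_gt hπ),
        intcos _ _ _ (by positivity : (2*π:ℝ) ≠ 0)]
      simp [Real.sin_pi, Real.sin_two_pi]
    rw [← e0]
    apply intervalIntegral.integral_mono_on (by norm_num)
      ((continuous_const.mul (hcontf.pow 2)).intervalIntegrable 0 1)
      (gint 0 (by norm_num))
    intro u hu
    exact glb u hu
  -- now the choice v̂
  set r : ℝ := ρ ^ (-2/5 : ℝ) with hr
  have hr0 : 0 < r := Real.rpow_pos_of_pos hρ0 _
  have hr1 : r ≤ 1 := Real.rpow_le_one_of_one_le_of_nonpos hρ (by norm_num)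
  have hv : 1 - r ∈ Icc (0:ℝ) 1 := ⟨by linarith, by linarith⟩
  have hmem : 1 - r ∈ Ico (0:ℝ) 1 := ⟨by linarith, by linarith⟩
  refine ⟨hmem, H0, ?_⟩
  -- rpow arithmetic
  have hr3 : r^3 = ρ ^ (-6/5 : ℝ) := by
    rw [hr, ← Real.rpow_natCast (ρ ^ (-2/5:ℝ)) 3, ← Real.rpow_mul (le_of_lt hρ0)]
    norm_num
  have hr2 : r^2 = ρ ^ (-4/5 : ℝ) := by
    rw [hr, ← Real.rpow_natCast (ρ ^ (-2/5:ℝ)) 2, ← Real.rpow_mul (le_of_lt hρ0)]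
    norm_num
  have hρ15 : 0 < ρ ^ (1/5 : ℝ) := Real.rpow_pos_of_pos hρ0 _
  have hmul3 : ρ * r^3 = (ρ ^ (1/5:ℝ))⁻¹ := by
    rw [hr3, ← Real.rpow_neg (le_of_lt hρ0)]
    nth_rewrite 1 [← Real.rpow_one ρ]
    rw [← Real.rpow_add hρ0]
    norm_num

  have hmul2 : ρ * r^2 = ρ ^ (1/5:ℝ) := by
    rw [hr2]
    nth_rewrite 1 [← Real.rpow_one ρ]
    rw [← Real.rpow_add hρ0]
    norm_num
  -- term 1
  have HLv : r^3/3 ≤ H (1 - r) := by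
    have := HL (1-r) hv
    simpa using this
  have hHv0 : 0 < H (1-r) := lt_of_lt_of_le (by positivity) HLv
  have t1 : H 0 / (ρ * H (1-r)) ≤ (3/2) * ρ ^ (1/5:ℝ) := by
    rw [H0]
    have step : (1:ℝ)/2 / (ρ * H (1-r)) ≤ (1/2) / (ρ * (r^3/3)) := by
      apply div_le_div_of_nonneg_left (by norm_num) (by positivity)
      exact mul_le_mul_of_nonneg_left HLv (le_of_lt hρ0)
    calc (1:ℝ)/2 / (ρ * H (1-r)) ≤ (1/2) / (ρ * (r^3/3)) := step
      _ = (3/2) / (ρ * r^3) := by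
          have hρne : ρ ≠ 0 := ne_of_gt hρ0
          have hrne : r ≠ 0 := ne_of_gt hr0
          field_simp
      _ = (3/2) * ρ ^ (1/5:ℝ) := by rw [hmul3, div_eq_mul_inv, inv_inv]
  -- term 2
  have IUv : I (1-r) ≤ 3*π^4/32 * r^2 := by
    have := IU (1-r) hv
    simpa using this
  have hI0 : 0 < I 0 := lt_of_lt_of_le (by norm_num) IL
  have t2 : ρ * I (1-r) / I 0 ≤ (π^4/8) * ρ ^ (1/5:ℝ) := by
    have hIv0 : 0 ≤ I (1-r) := Inonneg _ hv
    have step1 : ρ * I (1-r) / I 0 ≤ ρ * I (1-r) / (3/4) :=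
      div_le_div_of_nonneg_left (by positivity) (by norm_num) IL
    have step2 : ρ * I (1-r) / (3/4) ≤ ρ * (3*π^4/32 * r^2) / (3/4) := by
      apply div_le_div_of_nonneg_right _ (by norm_num)
      exact mul_le_mul_of_nonneg_left IUv (le_of_lt hρ0)
    calc ρ * I (1-r) / I 0 ≤ ρ * (3*π^4/32 * r^2) / (3/4) := le_trans step1 step2
      _ = (π^4/8) * (ρ * r^2) := by ring
      _ = (π^4/8) * ρ ^ (1/5:ℝ) := by rw [hmul2]
  -- combine
  have hπle : π ≤ 3.15 := le_of_lt Real.pi_lt_d2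
  have hπ4 : π^4 ≤ 100 := by
    have hp0 : (0:ℝ) ≤ π := le_of_lt pi_pos
    have h2 : π^2 ≤ 9.9225 := by nlinarith
    nlinarith [sq_nonneg π, sq_nonneg (π^2)]
  calc H 0 / (ρ * H (1-r)) + ρ * I (1-r) / I 0
      ≤ (3/2) * ρ ^ (1/5:ℝ) + (π^4/8) * ρ ^ (1/5:ℝ) := add_le_add t1 t2
    _ ≤ 18 * ρ ^ (1/5:ℝ) := by
        nlinarith [mul_nonneg (by nlinarith : (0:ℝ) ≤ 18 - 3/2 - π^4/8) hρ15.le]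
end

section
/- Let C ⊆ ℝ^d be convex, f : C → ℝ convex, x_1, x̂ ∈ C, and g_1,...,g_T ∈ ℝ^d, η_1,...,η_T > 0 with iterates x_{t+1} = x_t - η_t g_t. Define v_t = η_T/(∑_{s=t}^T η_s), v_0 = v_1, z_0 = x̂, and z_t = (v_{t-1}/v_t)·z_{t-1} + (1 - v_{t-1}/v_t)·x_t. Then η_T·v_T·(f(x_{T+1}) - f(x̂)) ≤ ∑_{t=1}^T η_t·v_t·(f(x_{t+1}) - f(z_t)), assuming all iterates and z_t lie in C. -/
open Finset Set

theorem stmt9 (d T : ℕ) (hT : 1 ≤ T)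
    (C : Set (EuclideanSpace ℝ (Fin d))) (hC : Convex ℝ C)
    (f : EuclideanSpace ℝ (Fin d) → ℝ) (hf : ConvexOn ℝ C f)
    (η : ℕ → ℝ) (hpos : ∀ t ∈ Finset.Icc 1 T, 0 < η t)
    (g x z : ℕ → EuclideanSpace ℝ (Fin d))
    (xhat : EuclideanSpace ℝ (Fin d)) (hxhat : xhat ∈ C)
    (hx1 : x 1 ∈ C)
    (hstep : ∀ t ∈ Finset.Icc 1 T, x (t + 1) = x t - η t • g t)
    (v : ℕ → ℝ)
    (hv : ∀ t, v t = η T / ∑ s ∈ Finset.Icc (max t 1) T, η s)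
    (hz0 : z 0 = xhat)
    (hz : ∀ t ∈ Finset.Icc 1 T,
      z t = (v (t - 1) / v t) • z (t - 1) + (1 - v (t - 1) / v t) • x t)
    (hxC : ∀ t ∈ Finset.Icc 1 (T + 1), x t ∈ C)
    (hzC : ∀ t ∈ Finset.Icc 1 T, z t ∈ C) :
    η T * v T * (f (x (T + 1)) - f xhat)
      ≤ ∑ t ∈ Finset.Icc 1 T, η t * v t * (f (x (t + 1)) - f (z t)) := by
  set S : ℕ → ℝ := fun t => ∑ s ∈ Finset.Icc t T, η s with hS
  have hvt : ∀ t, 1 ≤ t → v t = η T / S t := by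
    intro t ht
    rw [hv t, max_eq_left ht]
  have hηT : 0 < η T := hpos T (Finset.mem_Icc.mpr ⟨hT, le_refl T⟩)
  have hSpos : ∀ t, 1 ≤ t → t ≤ T → 0 < S t := by
    intro t h1 h2
    apply Finset.sum_pos
    · intro i hi
      rw [Finset.mem_Icc] at hi
      exact hpos i (Finset.mem_Icc.mpr ⟨le_trans h1 hi.1, hi.2⟩)
    · exact ⟨t, Finset.mem_Icc.mpr ⟨le_refl t, h2⟩⟩
  have hvpos : ∀ t, 1 ≤ t → t ≤ T → 0 < v t := by
    intro t h1 h2; rw [hvt t h1]; exact div_pos hηT (hSpos t h1 h2)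
  have hvS : ∀ t, 1 ≤ t → t ≤ T → v t * S t = η T := by
    intro t h1 h2
    rw [hvt t h1]
    exact div_mul_cancel₀ (η T) (ne_of_gt (hSpos t h1 h2))
  have hSrec : ∀ k, 1 ≤ k → k ≤ T → S k = η k + S (k + 1) := by
    intro k h1 h2
    have hins : Finset.Icc k T = insert k (Finset.Icc (k + 1) T) := by
      rw [Finset.Icc_add_one_left_eq_Ioc, Finset.Ioc_insert_left h2]
    show (∑ s ∈ Finset.Icc k T, η s) = η k + ∑ s ∈ Finset.Icc (k + 1) T, η s
    rw [hins, Finset.sum_insert (by simp)]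
  have hv01 : v 0 = v 1 := by rw [hv 0, hv 1]; norm_num
  -- v is positive up to T (including index 0)
  have hvpos0 : ∀ t, t ≤ T → 0 < v t := by
    intro t ht
    cases t with
    | zero => rw [hv01]; exact hvpos 1 le_rfl hT
    | succ n => exact hvpos (n + 1) (Nat.succ_le_succ (Nat.zero_le n)) ht
  -- v is monotone: v (t-1) ≤ v t
  have hvmono : ∀ t, 1 ≤ t → t ≤ T → v (t - 1) ≤ v t := by
    intro t h1 h2
    match t, h1 with
    | 1, _ => simp [← hv01]
    | (k + 2), _ =>
      have hk1 : 1 ≤ k + 1 := Nat.succ_le_succ (Nat.zero_le k)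
      have hk1T : k + 1 ≤ T := le_trans (Nat.le_succ _) h2
      rw [show k + 2 - 1 = k + 1 from rfl, hvt (k + 1) hk1, hvt (k + 2) (by omega)]
      have hle : S (k + 2) ≤ S (k + 1) := by
        have := hSrec (k + 1) hk1 hk1T
        have := hpos (k + 1) (Finset.mem_Icc.mpr ⟨hk1, hk1T⟩)
        linarith
      exact div_le_div_of_nonneg_left (le_of_lt hηT) (hSpos (k + 2) (by omega) h2) hle
  -- convexity step
  have hA : ∀ t, 1 ≤ t → t ≤ T →
      v t * f (z t) ≤ v (t - 1) * f (z (t - 1)) + (v t - v (t - 1)) * f (x t) := by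
    intro t h1 h2
    have hvt2 : 0 < v t := hvpos t h1 h2
    have hvtm : 0 < v (t - 1) := hvpos0 (t - 1) (by omega)
    have hzmem : z (t - 1) ∈ C := by
      match t, h1 with
      | 1, _ => rw [show (1 : ℕ) - 1 = 0 from rfl, hz0]; exact hxhat
      | (k + 2), _ => exact hzC (k + 1) (Finset.mem_Icc.mpr ⟨by omega, by omega⟩)
    have ha0 : 0 ≤ v (t - 1) / v t := le_of_lt (div_pos hvtm hvt2)
    have ha1 : v (t - 1) / v t ≤ 1 := (div_le_one hvt2).mpr (hvmono t h1 h2)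
    have hxm : x t ∈ C := hxC t (Finset.mem_Icc.mpr ⟨h1, le_trans h2 (Nat.le_succ T)⟩)
    have hcv := hf.2 hzmem hxm ha0 (by linarith : (0:ℝ) ≤ 1 - v (t - 1) / v t) (by ring)
    rw [← hz t (Finset.mem_Icc.mpr ⟨h1, h2⟩)] at hcv
    simp only [smul_eq_mul] at hcv
    have hmul := mul_le_mul_of_nonneg_left hcv (le_of_lt hvt2)
    have hid : v t * (v (t - 1) / v t * f (z (t - 1)) + (1 - v (t - 1) / v t) * f (x t))
        = v (t - 1) * f (z (t - 1)) + (v t - v (t - 1)) * f (x t) := by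
      field_simp
      try ring
    rw [hid] at hmul
    exact hmul
  -- main induction
  have hMain : ∀ k, 1 ≤ k → k ≤ T →
      η k * v k * f (x (k + 1)) + S (k + 1) * (v k * f (z k)) - η T * f xhat
        ≤ ∑ t ∈ Finset.Icc 1 k, η t * v t * (f (x (t + 1)) - f (z t)) := by
    intro k hk
    induction k, hk using Nat.le_induction with
    | base =>
      intro h1T
      have hv1 : 0 < v 1 := hvpos 1 le_rfl h1T
      have hr : v 0 / v 1 = 1 := by rw [hv01]; exact div_self (ne_of_gt hv1)
      have hz1 : z 1 = xhat := by
        have h := hz 1 (Finset.mem_Icc.mpr ⟨le_rfl, h1T⟩)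
        rw [show (1 : ℕ) - 1 = 0 from rfl, hr] at h
        simpa [hz0] using h
      rw [Finset.Icc_self, Finset.sum_singleton, hz1]
      have hkey1 : η T = v 1 * η 1 + v 1 * S 2 := by
        linear_combination (v 1) * hSrec 1 le_rfl h1T - hvS 1 le_rfl h1T
      have : η 1 * v 1 * f (x 2) + S 2 * (v 1 * f xhat) - η T * f xhat
          = η 1 * v 1 * (f (x 2) - f xhat) := by
        linear_combination (- f xhat) * hkey1
      linarith [this.le, this.ge]
    | succ k hk1 IH =>
      intro hk1T
      have hkT : k ≤ T := le_trans (Nat.le_succ k) hk1T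
      have IH' := IH hkT
      rw [Finset.sum_Icc_succ_top (by omega : 1 ≤ k + 1)]
      have hAk := hA (k + 1) (by omega) hk1T
      rw [Nat.add_sub_cancel] at hAk
      have hSnn : 0 ≤ S (k + 1) := le_of_lt (hSpos (k + 1) (by omega) hk1T)
      have hmul := mul_le_mul_of_nonneg_left hAk hSnn
      have hkey : S (k + 1) * (v (k + 1) - v k) = η k * v k := by
        linear_combination hvS (k + 1) (by omega) hk1T - hvS k hk1 hkT
          + (v k) * hSrec k hk1 hkT
      have hrec1 := hSrec (k + 1) (by omega) hk1T
      have e1 : S (k + 1) * (v (k + 1) * f (z (k + 1)))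
          = η (k + 1) * (v (k + 1) * f (z (k + 1)))
            + S (k + 2) * (v (k + 1) * f (z (k + 1))) := by
        rw [hrec1]; ring
      have e2 : S (k + 1) * (v k * f (z k) + (v (k + 1) - v k) * f (x (k + 1)))
          = S (k + 1) * (v k * f (z k)) + η k * v k * f (x (k + 1)) := by
        linear_combination (f (x (k + 1))) * hkey
      linarith [hmul, IH', e1, e2]
  have hST1 : S (T + 1) = 0 := by
    simp [hS, Finset.Icc_eq_empty (by omega : ¬ T + 1 ≤ T)]
  have hST : S T = η T := by
    simp [hS, Finset.Icc_self]
  have hvT : v T = 1 := by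
    rw [hvt T hT, hST]
    exact div_self (ne_of_gt hηT)
  have hfin := hMain T hT le_rfl
  rw [hST1, hvT] at hfin
  rw [hvT]
  linarith
end

section
/- Consider GD with fixed stepsize η on f(x) = G|x| over the interval D = [-D/2, D/2] (with subgradient +G at 0), starting at x_1 = (3/4)·G·η where η ≤ D/2G. Then the iterates alternate: x_t = (3/4)Gη for odd t and x_t = -(1/4)Gη for even t, and consequently for any nonnegative weights w_1,...,w_T with ∑ w_t > 0 and ∑_{odd t} w_t ≥ ∑_{even t} w_t, the weighted average x̄ = (∑ w_t x_t)/(∑ w_t) satisfies x̄ ≥ Gη/4, hence f(x̄) ≥ ηG²/4. -/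
open Finset

theorem stmt12 (G D η : ℝ) (hG : 0 < G) (hD : 0 < D) (hη : 0 < η)
    (hηle : η ≤ D / (2 * G))
    (proj sgn : ℝ → ℝ)
    (hproj : ∀ y, proj y = max (-(D / 2)) (min (D / 2) y))
    (hsgn : ∀ y, sgn y = if y < 0 then -1 else 1)
    (x : ℕ → ℝ) (hx1 : x 1 = (3 / 4) * G * η)
    (hstep : ∀ t, 1 ≤ t → x (t + 1) = proj (x t - η * (G * sgn (x t))))
    (T : ℕ) (w : ℕ → ℝ)
    (hw : ∀ t ∈ Finset.Icc 1 T, 0 ≤ w t)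
    (hwpos : 0 < ∑ t ∈ Finset.Icc 1 T, w t)
    (hodd : ∑ t ∈ (Finset.Icc 1 T).filter (fun t => Even t), w t
          ≤ ∑ t ∈ (Finset.Icc 1 T).filter (fun t => Odd t), w t) :
    (∀ t, 1 ≤ t → (Odd t → x t = (3 / 4) * G * η) ∧ (Even t → x t = -((1 / 4) * G * η))) ∧
    G * η / 4 ≤ (∑ t ∈ Finset.Icc 1 T, w t * x t) / (∑ t ∈ Finset.Icc 1 T, w t) ∧
    η * G ^ 2 / 4 ≤ G * |(∑ t ∈ Finset.Icc 1 T, w t * x t) / (∑ t ∈ Finset.Icc 1 T, w t)| := by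
  have hGη : 0 < G * η := mul_pos hG hη
  have hGηD : G * η ≤ D / 2 := by
    rw [le_div_iff₀ (by positivity : (0:ℝ) < 2 * G)] at hηle
    nlinarith
  have key : ∀ t, 1 ≤ t →
      (Odd t → x t = (3 / 4) * G * η) ∧ (Even t → x t = -((1 / 4) * G * η)) := by
    intro t ht
    induction t, ht using Nat.le_induction with
    | base =>
      refine ⟨fun _ => hx1, fun h => ?_⟩
      simp [Nat.even_iff] at h
    | succ n hn ih =>
      constructor
      · intro ho
        have he : Even n := by
          rw [Nat.odd_add_one] at ho
          exact Nat.not_odd_iff_even.mp ho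
        have hval : x n - η * (G * sgn (x n)) = (3 / 4) * G * η := by
          rw [ih.2 he, hsgn, if_pos (by nlinarith)]; ring
        rw [hstep n hn, hval, hproj,
          min_eq_right (by nlinarith), max_eq_right (by nlinarith)]
      · intro he
        have ho : Odd n := by
          rw [Nat.even_add_one] at he
          exact Nat.not_even_iff_odd.mp he
        have hval : x n - η * (G * sgn (x n)) = -((1 / 4) * G * η) := by
          rw [ih.1 ho, hsgn, if_neg (by nlinarith)]; ring
        rw [hstep n hn, hval, hproj,
          min_eq_right (by nlinarith), max_eq_right (by nlinarith)]
  refine ⟨key, ?_⟩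
  set S := Finset.Icc 1 T with hS
  set So := ∑ t ∈ S.filter (fun t => Odd t), w t with hSo
  set Se := ∑ t ∈ S.filter (fun t => Even t), w t with hSe
  have hSonneg : 0 ≤ So := Finset.sum_nonneg fun t ht =>
    hw t (Finset.mem_filter.mp ht).1
  have hSenneg : 0 ≤ Se := Finset.sum_nonneg fun t ht =>
    hw t (Finset.mem_filter.mp ht).1
  have hfilt : S.filter (fun t => ¬ Even t) = S.filter (fun t => Odd t) :=
    Finset.filter_congr fun t _ => Nat.not_even_iff_odd
  have hwsplit : (∑ t ∈ S, w t) = Se + So := by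
    rw [← Finset.sum_filter_add_sum_filter_not S (fun t => Even t) w, hfilt]
  have hnum : (∑ t ∈ S, w t * x t)
      = Se * (-((1 / 4) * G * η)) + So * ((3 / 4) * G * η) := by
    rw [← Finset.sum_filter_add_sum_filter_not S (fun t => Even t) (fun t => w t * x t),
      hfilt]
    congr 1
    · rw [Finset.sum_mul]
      refine Finset.sum_congr rfl fun t ht => ?_
      obtain ⟨ht1, ht2⟩ := Finset.mem_filter.mp ht
      rw [(key t (Finset.mem_Icc.mp ht1).1).2 ht2]
    · rw [Finset.sum_mul]
      refine Finset.sum_congr rfl fun t ht => ?_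
      obtain ⟨ht1, ht2⟩ := Finset.mem_filter.mp ht
      rw [(key t (Finset.mem_Icc.mp ht1).1).1 ht2]
  have hden : 0 < Se + So := by rw [← hwsplit]; exact hwpos
  have hbar : G * η / 4 ≤ (∑ t ∈ S, w t * x t) / (∑ t ∈ S, w t) := by
    rw [hnum, hwsplit, le_div_iff₀ hden]
    nlinarith
  refine ⟨hbar, ?_⟩
  have hpos : 0 < (∑ t ∈ S, w t * x t) / (∑ t ∈ S, w t) := lt_of_lt_of_le (by positivity) hbar
  rw [abs_of_pos hpos]
  nlinarith
end

section
/- Let H : [0,1] → ℝ be continuously differentiable, positive on [0,1), nonincreasing, with H(1) = 0 and H' = -h for a continuous nonincreasing nonnegative h. Fix ρ ≥ 1 and define g(v) = H(0)/(ρ·H(v)) + ρ·I(v)/I(0) where I(v) = ∫_v^1 H'(u)²/H(u) du (assumed finite). If v̂ ∈ [0,1) satisfies H(v̂)·H'(v̂) = -H(0)·I(0)/ρ², then v̂ is a global minimizer of g on [0,1). -/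
/-!
At the critical point `H(v̂) h(v̂) = H(0) I(0) / ρ²`, which turns the first term of `g` into a multiple
of the second: `g v - g v̂ = (ρ / I(0)) (I v - I v̂ - (h v̂ / H v) (H v - H v̂))`. So it suffices that
`(h v̂ / H v) ∫_v^v̂ h ≤ ∫_v^v̂ h² / H`, and this holds pointwise: as `h` and `H` are nonincreasing,
between `v` and `v̂` the integrand `h² / H` is at least `h(v̂) h / H(v)` when `v ≤ v̂` and at most it
when `v̂ ≤ v`, matching the orientation of the integral.
-/

open Set MeasureTheory intervalIntegral

section IntegralBounds

variable {f F : ℝ → ℝ} {a b : ℝ}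

theorem integral_interval_sub_right {μ : Measure ℝ} {c : ℝ}
    (ha : IntervalIntegrable f μ a c) (hb : IntervalIntegrable f μ b c) :
    (∫ u in a..c, f u ∂μ) - ∫ u in b..c, f u ∂μ = ∫ u in a..b, f u ∂μ :=
  sub_eq_of_eq_add (integral_add_adjacent_intervals (ha.trans hb.symm) hb).symm

theorem antitoneOn_integral_left (hf : IntervalIntegrable f volume a b)
    (hf₀ : ∀ u ∈ Icc a b, 0 ≤ f u) : AntitoneOn (fun x => ∫ u in x..b, f u) (Icc a b) := by
  intro x hx y hy hxy
  refine integral_mono_interval hxy hy.2 le_rfl ?_ (hf.mono_set ?_)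
  · exact ae_restrict_of_forall_mem measurableSet_Ioc fun u hu => hf₀ u ⟨hx.1.trans hu.1.le, hu.2⟩
  · rw [uIcc_of_le hx.2, uIcc_of_le (hx.1.trans hx.2)]
    exact Icc_subset_Icc hx.1 le_rfl

section Icc

variable (hab : a ≤ b) (hf : AntitoneOn f (Icc a b)) (hf₀ : ∀ u ∈ Icc a b, 0 ≤ f u)
  (hF : AntitoneOn F (Icc a b)) (hFb : 0 < F b)
  (hfi : IntervalIntegrable f volume a b)
  (hgi : IntervalIntegrable (fun u => f u ^ 2 / F u) volume a b)
include hab hf hf₀ hF hFb hfi hgi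

theorem div_mul_integral_le_integral_sq_div :
    f b / F a * ∫ u in a..b, f u ≤ ∫ u in a..b, f u ^ 2 / F u := by
  rw [← intervalIntegral.integral_const_mul]
  refine integral_mono_on hab (hfi.const_mul _) hgi fun u hu => ?_
  have hFu : 0 < F u := hFb.trans_le (hF hu ⟨hab, le_rfl⟩ hu.2)
  calc f b / F a * f u = f b * f u / F a := div_mul_eq_mul_div _ _ _
    _ ≤ f u * f u / F u :=
      div_le_div₀ (mul_self_nonneg _) (mul_le_mul_of_nonneg_right (hf hu ⟨hab, le_rfl⟩ hu.2)
        (hf₀ u hu)) hFu (hF ⟨le_rfl, hab⟩ hu hu.1)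
    _ = f u ^ 2 / F u := by rw [sq]

theorem integral_sq_div_le_div_mul_integral :
    ∫ u in a..b, f u ^ 2 / F u ≤ f a / F b * ∫ u in a..b, f u := by
  rw [← intervalIntegral.integral_const_mul]
  refine integral_mono_on hab hgi (hfi.const_mul _) fun u hu => ?_
  calc f u ^ 2 / F u = f u * f u / F u := by rw [sq]
    _ ≤ f a * f u / F b :=
      div_le_div₀ (mul_nonneg (hf₀ a ⟨le_rfl, hab⟩) (hf₀ u hu))
        (mul_le_mul_of_nonneg_right (hf ⟨le_rfl, hab⟩ hu hu.1) (hf₀ u hu)) hFb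
        (hF hu ⟨hab, le_rfl⟩ hu.2)
    _ = f a / F b * f u := (div_mul_eq_mul_div _ _ _).symm

end Icc

theorem div_mul_integral_le_integral_sq_div_of_uIcc (hf : AntitoneOn f (uIcc a b))
    (hf₀ : ∀ u ∈ uIcc a b, 0 ≤ f u) (hF : AntitoneOn F (uIcc a b))
    (hF₀ : ∀ u ∈ uIcc a b, 0 < F u) (hfi : IntervalIntegrable f volume a b)
    (hgi : IntervalIntegrable (fun u => f u ^ 2 / F u) volume a b) :
    f b / F a * ∫ u in a..b, f u ≤ ∫ u in a..b, f u ^ 2 / F u := by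
  rcases le_total a b with hab | hba
  · rw [uIcc_of_le hab] at hf hf₀ hF hF₀
    exact div_mul_integral_le_integral_sq_div hab hf hf₀ hF (hF₀ b ⟨hab, le_rfl⟩) hfi hgi
  · rw [uIcc_of_ge hba] at hf hf₀ hF hF₀
    have := integral_sq_div_le_div_mul_integral hba hf hf₀ hF (hF₀ a ⟨hba, le_rfl⟩) hfi.symm
      hgi.symm
    rw [integral_symm b, integral_symm b (f := fun u => f u ^ 2 / F u)]
    linarith

end IntegralBounds

theorem div_add_div_le_of_critical {ρ H₀ I₀ Hv Hw Iv Iw hw : ℝ} (hρ : 0 < ρ) (hI₀ : 0 < I₀)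
    (hHv : 0 < Hv) (hHw : 0 < Hw) (hcrit : Hw * -hw = -(H₀ * I₀) / ρ ^ 2)
    (hkey : hw / Hv * (Hv - Hw) ≤ Iv - Iw) :
    H₀ / (ρ * Hw) + ρ * Iw / I₀ ≤ H₀ / (ρ * Hv) + ρ * Iv / I₀ := by
  have hc : ρ ^ 2 * (Hw * hw) = H₀ * I₀ := by
    field_simp at hcrit
    linarith
  have hdiff : H₀ / (ρ * Hv) + ρ * Iv / I₀ - (H₀ / (ρ * Hw) + ρ * Iw / I₀) =
      ρ / I₀ * (Iv - Iw - hw / Hv * (Hv - Hw)) := by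
    field_simp
    linear_combination (Hv - Hw) * hc
  exact sub_nonneg.1 (hdiff ▸ mul_nonneg (div_nonneg hρ.le hI₀.le) (sub_nonneg.2 hkey))

theorem stmt16_general (ρ : ℝ) (hρ : 1 ≤ ρ) (h H I g : ℝ → ℝ)
    (hcont : ContinuousOn h (Icc (0:ℝ) 1))
    (hmono : AntitoneOn h (Icc (0:ℝ) 1))
    (hnonneg : ∀ u ∈ Icc (0:ℝ) 1, 0 ≤ h u)
    (hH : ∀ v, H v = ∫ u in v..1, h u)
    (hHpos : ∀ v ∈ Ico (0:ℝ) 1, 0 < H v)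
    (hI : ∀ v, I v = ∫ u in v..1, (h u) ^ 2 / H u)
    (hint : ∀ v ∈ Ico (0:ℝ) 1,
      IntervalIntegrable (fun u => (h u) ^ 2 / H u) MeasureTheory.volume v 1)
    (hI0 : 0 < I 0)
    (hg : ∀ v, g v = H 0 / (ρ * H v) + ρ * I v / I 0)
    (vhat : ℝ) (hvhat : vhat ∈ Ico (0:ℝ) 1)
    (hcrit : H vhat * (-h vhat) = -(H 0 * I 0) / ρ ^ 2) :
    ∀ v ∈ Ico (0:ℝ) 1, g vhat ≤ g v := by
  intro v hv
  have hs : uIcc v vhat ⊆ Ico 0 1 := ordConnected_Ico.uIcc_subset hv hvhat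
  have hs' : uIcc v vhat ⊆ Icc 0 1 := hs.trans Ico_subset_Icc_self
  have hhi : ∀ x ∈ Icc (0:ℝ) 1, IntervalIntegrable h volume x 1 := fun x hx =>
    (hcont.mono (by rw [uIcc_of_le hx.2]; exact Icc_subset_Icc hx.1 le_rfl)).intervalIntegrable
  have hhv := hhi v (Ico_subset_Icc_self hv)
  have hhvhat := hhi vhat (Ico_subset_Icc_self hvhat)
  have hHanti : AntitoneOn H (Icc 0 1) := by
    simpa only [← funext hH] using antitoneOn_integral_left (hhi 0 ⟨le_rfl, zero_le_one⟩) hnonneg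
  have hkey : h vhat / H v * (H v - H vhat) ≤ I v - I vhat := by
    have hHsub : H v - H vhat = ∫ u in v..vhat, h u := by
      rw [hH, hH, integral_interval_sub_right hhv hhvhat]
    rw [hHsub, hI, hI, integral_interval_sub_right (hint v hv) (hint vhat hvhat)]
    exact div_mul_integral_le_integral_sq_div_of_uIcc (hmono.mono hs')
      (fun u hu => hnonneg u (hs' hu)) (hHanti.mono hs') (fun u hu => hHpos u (hs hu))
      (hhv.trans hhvhat.symm) ((hint v hv).trans (hint vhat hvhat).symm)
  rw [hg v, hg vhat]
  exact div_add_div_le_of_critical (by linarith) hI0 (hHpos v hv) (hHpos vhat hvhat) hcrit hkey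

theorem stmt16 (ρ : ℝ) (hρ : 1 ≤ ρ) (h H I g : ℝ → ℝ)
    (hcont : ContinuousOn h (Icc (0:ℝ) 1))
    (hmono : AntitoneOn h (Icc (0:ℝ) 1))
    (hnonneg : ∀ u ∈ Icc (0:ℝ) 1, 0 ≤ h u)
    (hend : h 1 = 0)
    (hH : ∀ v, H v = ∫ u in v..1, h u)
    (hHpos : ∀ v ∈ Ico (0:ℝ) 1, 0 < H v)
    (hI : ∀ v, I v = ∫ u in v..1, (h u) ^ 2 / H u)
    (hint : ∀ v ∈ Ico (0:ℝ) 1,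
      IntervalIntegrable (fun u => (h u) ^ 2 / H u) MeasureTheory.volume v 1)
    (hI0 : 0 < I 0)
    (hg : ∀ v, g v = H 0 / (ρ * H v) + ρ * I v / I 0)
    (vhat : ℝ) (hvhat : vhat ∈ Ico (0:ℝ) 1)
    (hcrit : H vhat * (-h vhat) = -(H 0 * I 0) / ρ ^ 2) :
    ∀ v ∈ Ico (0:ℝ) 1, g vhat ≤ g v :=
  stmt16_general ρ hρ h H I g hcont hmono hnonneg hH hHpos hI hint hI0 hg vhat hvhat hcrit
end
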